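/- arXiv:2005.04348 — 8 statements merged into one kernel-verified Lean document; each statement's English description precedes it below -/
import Mathlib

section
/- Let M be a positive integer and b, d, B, D positive integers with bd = BD = M and d ≤ D. Let Q = dL = Dl be the least common multiple of d and D. Then the number of fixed coincidence points c(Γ(b,d), Γ(B,D)) = #{(i,j) ∈ [M]² : Γ(b,d)(i,j) = Γ(B,D)(i,j)} satisfies M²/L² ≤ c(Γ(b,d), Γ(B,D)) ≤ M²/L. -/
/-!
Whether `Γ(b,d)` and `Γ(B,D)` agree at `(i,j)` depends only on whether
`i % d - i % D = j % d - j % D`, and this difference is periodic with period `Q = lcm(d,D)`.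
Writing `M = Q k`, every row `i` therefore contains `k` times as many coincidences as the level
set of `i` has points in `[0,Q)`. Such a level set has at most `d` points there, since `j % d`
and the level determine `j % D`, hence `j % Q`. It has at least `gcd(d,D)` points, since it
contains the block of all `j` with `j / d = i / d` and `j / D = i / D`, an interval whose
endpoints are multiples of `d` or `D`. The bounds follow from `Q = dL` and `gcd(d,D) L = D ≥ d`.
-/

/-- The partial transpose `Γ(b,d)` in 0-based coordinates. -/
def pt (d : ℕ) (p : ℕ × ℕ) : ℕ × ℕ :=
  (d * (p.1 / d) + p.2 % d, d * (p.2 / d) + p.1 % d)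

open Finset Function

namespace Nat

theorem count_mul_of_periodic {p : ℕ → Prop} [DecidablePred p] {a : ℕ} (hp : Periodic p a)
    (k : ℕ) : count p (a * k) = k * count p a := by
  induction k with
  | zero => simp
  | succ k ih =>
    have hshift : (fun j => p (a * k + j)) = p :=
      funext fun j => by rw [add_comm, mul_comm, ← hp.nat_mul k j, Nat.cast_id]
    simp only [Nat.mul_succ, count_add, ih, hshift, Nat.succ_mul]

end Nat

def modDiff (d D n : ℕ) : ℤ := ((n % d : ℕ) : ℤ) - ((n % D : ℕ) : ℤ)

theorem pt_eq_pt_iff_modDiff_eq (d D i j : ℕ) :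
    pt d (i, j) = pt D (i, j) ↔ modDiff d D i = modDiff d D j := by
  simp only [pt, Prod.mk.injEq, modDiff]
  have := Nat.div_add_mod i d
  have := Nat.div_add_mod j d
  have := Nat.div_add_mod i D
  have := Nat.div_add_mod j D
  omega

theorem modDiff_periodic (d D : ℕ) : Periodic (modDiff d D) (Nat.lcm d D) := fun n => by
  obtain ⟨a, ha⟩ := Nat.dvd_lcm_left d D
  obtain ⟨b, hb⟩ := Nat.dvd_lcm_right d D
  simp only [modDiff]
  rw [ha, Nat.add_mul_mod_self_left, ← ha, hb, Nat.add_mul_mod_self_left]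

theorem modDiff_eq_periodic (d D : ℕ) (v : ℤ) :
    Periodic (fun j => v = modDiff d D j) (Nat.lcm d D) := fun n => by
  simp only [modDiff_periodic d D n]

theorem modDiff_eq_of_div_eq {d D n m : ℕ} (hd : n / d = m / d) (hD : n / D = m / D) :
    modDiff d D n = modDiff d D m := by
  have hn := Nat.div_add_mod n d
  have hn' := Nat.div_add_mod n D
  have := Nat.div_add_mod m d
  have := Nat.div_add_mod m D
  rw [hd] at hn
  rw [hD] at hn'
  simp only [modDiff]
  omega

theorem count_modDiff_le {d : ℕ} (hd : 0 < d) (D : ℕ) (v : ℤ) :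
    Nat.count (fun j => v = modDiff d D j) (Nat.lcm d D) ≤ d := by
  rw [Nat.count_eq_card_filter_range]
  refine (card_le_card_of_injOn (· % d) (t := range d) ?_ ?_).trans (card_range d).le
  · intro j _
    simpa using Nat.mod_lt j hd
  · intro j₁ hj₁ j₂ hj₂ hmod
    simp only [coe_filter, mem_range, Set.mem_ofPred_eq] at hj₁ hj₂ hmod
    have hmodD : j₁ % D = j₂ % D := by
      have := hj₁.2.symm.trans hj₂.2
      simp only [modDiff] at this
      omega
    exact (Nat.mod_lcm hmod hmodD).eq_of_lt_of_lt hj₁.1 hj₂.1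

theorem gcd_le_count_modDiff {d D : ℕ} (hd : 0 < d) (hD : 0 < D) (i : ℕ) :
    Nat.gcd d D ≤ Nat.count (fun j => modDiff d D i = modDiff d D j) (Nat.lcm d D) := by
  set g := Nat.gcd d D
  set lo := max (d * (i / d)) (D * (i / D))
  set hi := min (d * (i / d + 1)) (D * (i / D + 1))
  have hlo : lo ≤ i := max_le (Nat.mul_div_le i d) (Nat.mul_div_le i D)
  have hhi : i < hi := lt_min (Nat.lt_mul_div_succ i hd) (Nat.lt_mul_div_succ i hD)
  have hg_lo : g ∣ lo := by
    rcases max_choice (d * (i / d)) (D * (i / D)) with h | h <;> simp only [lo, h]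
    exacts [(Nat.gcd_dvd_left d D).mul_right _, (Nat.gcd_dvd_right d D).mul_right _]
  have hg_hi : g ∣ hi := by
    rcases min_choice (d * (i / d + 1)) (D * (i / D + 1)) with h | h <;> simp only [hi, h]
    exacts [(Nat.gcd_dvd_left d D).mul_right _, (Nat.gcd_dvd_right d D).mul_right _]
  have hblock_len : lo + g ≤ hi := by
    have := Nat.le_of_dvd (by omega) (Nat.dvd_sub hg_hi hg_lo)
    omega
  have hg_lcm : g ≤ Nat.lcm d D :=
    Nat.le_of_dvd (Nat.lcm_pos hd hD) ((Nat.gcd_dvd_left d D).trans (Nat.dvd_lcm_left d D))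
  have hblock : ∀ n ∈ Ico lo hi, modDiff d D i = modDiff d D n := by
    intro n hn
    rw [mem_Ico] at hn
    refine modDiff_eq_of_div_eq (Nat.div_eq_of_lt_le ?_ ?_).symm (Nat.div_eq_of_lt_le ?_ ?_).symm
    all_goals
      simp only [lo, hi, max_le_iff, lt_min_iff] at hn
      linarith [hn.1.1, hn.1.2, hn.2.1, hn.2.2]
  calc g = #(Ico lo (lo + g)) := by simp
    _ ≤ #{j ∈ Ico lo (lo + Nat.lcm d D) | modDiff d D i = modDiff d D j} := by
      refine card_le_card fun n hn => ?_
      rw [mem_Ico] at hn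
      exact mem_filter.2
        ⟨mem_Ico.2 ⟨hn.1, by omega⟩, hblock n (mem_Ico.2 ⟨hn.1, by omega⟩)⟩
    _ = _ := Nat.filter_Ico_card_eq_of_periodic _ _ _ (modDiff_eq_periodic d D _)

theorem card_filter_pt_eq_pt (d D M : ℕ) :
    #{p ∈ range M ×ˢ range M | pt d p = pt D p} =
      ∑ i ∈ range M, Nat.count (fun j => modDiff d D i = modDiff d D j) M := by
  rw [card_filter, sum_product]
  refine sum_congr rfl fun i _ => ?_
  simp only [Nat.count_eq_card_filter_range, card_filter, pt_eq_pt_iff_modDiff_eq]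

theorem stmt_4_general (b d B D M L : ℕ) (hd : 0 < d)
    (hD : 0 < D) (hM : M = b * d) (hM' : M = B * D) (hdD : d ≤ D)
    (hL : Nat.lcm d D = d * L) :
    M ^ 2 ≤ (((Finset.range M) ×ˢ (Finset.range M)).filter
        (fun p => pt d p = pt D p)).card * L ^ 2 ∧
    (((Finset.range M) ×ˢ (Finset.range M)).filter
        (fun p => pt d p = pt D p)).card * L ≤ M ^ 2 := by
  obtain ⟨k, hk⟩ : Nat.lcm d D ∣ M :=
    Nat.lcm_dvd (hM ▸ dvd_mul_left d b) (hM' ▸ dvd_mul_left D B)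
  have hrow (i : ℕ) : ∃ c, Nat.gcd d D ≤ c ∧ c ≤ d ∧
      Nat.count (fun j => modDiff d D i = modDiff d D j) M = k * c := by
    refine ⟨_, gcd_le_count_modDiff hd hD i, count_modDiff_le hd D _, ?_⟩
    rw [hk]
    exact Nat.count_mul_of_periodic (modDiff_eq_periodic d D _) k
  have hgL : Nat.gcd d D * L = D :=
    Nat.eq_of_mul_eq_mul_left hd (by rw [← Nat.gcd_mul_lcm d D, hL]; ring)
  have hM_sq : ∑ _i ∈ range M, M = M ^ 2 := by rw [sum_const, card_range, smul_eq_mul, sq]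
  rw [card_filter_pt_eq_pt, sum_mul, sum_mul, ← hM_sq]
  constructor
  · refine sum_le_sum fun i _ => ?_
    obtain ⟨c, hgc, -, hc⟩ := hrow i
    rw [hc, hk, hL]
    calc d * L * k ≤ Nat.gcd d D * L * L * k := by rw [hgL]; gcongr
      _ ≤ c * L * L * k := by gcongr
      _ = k * c * L ^ 2 := by ring
  · refine sum_le_sum fun i _ => ?_
    obtain ⟨c, -, hcd, hc⟩ := hrow i
    rw [hc, hk, hL]
    calc k * c * L ≤ k * d * L := by gcongr
      _ = d * L * k := by ring

/-- Let `bd = BD = M`, `d ≤ D`, and `L = lcm(d,D)/d`.  Then the number `c` of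
points `(i,j) ∈ [M]²` where `Γ(b,d)` and `Γ(B,D)` agree satisfies
`M²/L² ≤ c ≤ M²/L` (stated multiplicatively: `M² ≤ c·L²` and `c·L ≤ M²`). -/
theorem stmt_4 (b d B D M L : ℕ) (hb : 0 < b) (hd : 0 < d) (hB : 0 < B)
    (hD : 0 < D) (hM : M = b * d) (hM' : M = B * D) (hdD : d ≤ D)
    (hL : Nat.lcm d D = d * L) :
    M ^ 2 ≤ (((Finset.range M) ×ˢ (Finset.range M)).filter
        (fun p => pt d p = pt D p)).card * L ^ 2 ∧
    (((Finset.range M) ×ˢ (Finset.range M)).filter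
        (fun p => pt d p = pt D p)).card * L ≤ M ^ 2 :=
  stmt_4_general b d B D M L hd hD hM hM' hdD hL
end

section
/- Let M = bd = BD with b,d,B,D positive integers. Then #{(i,j,k) ∈ [M]³ : π₂∘Γ(b,d)(i,j) = π₂∘Γ(B,D)(k,j)} ≤ M³/D, where π₂ is projection onto the second coordinate. -/
/-!
For fixed `(i, j)`, the equation `π₂ Γ(b,d)(i,j) = π₂ Γ(B,D)(k,j)` pins down `k mod D`, since the
column `j` fixes the block offset `D ⌊j/D⌋`. Hence `(i, j, k) ↦ (i, j, ⌊k/D⌋)` is injective on the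
solutions and maps them into `[M] × [M] × [B]`, giving at most `M² B = M³ / D` of them.
-/

open Finset

theorem pt_snd_eq_pt_snd_iff (D j k k' : ℕ) :
    (pt D (k, j)).2 = (pt D (k', j)).2 ↔ k ≡ k' [MOD D] := by
  simp [pt, Nat.ModEq]

theorem injOn_div_filter_pt_snd_eq (d D : ℕ) (s : Finset (ℕ × ℕ × ℕ)) :
    Set.InjOn (fun t : ℕ × ℕ × ℕ => (t.1, t.2.1, t.2.2 / D))
      (s.filter fun t => (pt d (t.1, t.2.1)).2 = (pt D (t.2.2, t.2.1)).2) := by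
  rintro ⟨i, j, k⟩ ht ⟨i', j', k'⟩ ht' h
  simp only [coe_filter, Set.mem_ofPred_eq, Prod.mk.injEq] at ht ht' h
  obtain ⟨rfl, rfl, hdiv⟩ := h
  have hmod : k ≡ k' [MOD D] := (pt_snd_eq_pt_snd_iff D j k k').1 (ht.2.symm.trans ht'.2)
  rw [Nat.ext_div_modEq hdiv hmod]

theorem mapsTo_div_range_product (B D M : ℕ) (hM : M = B * D) :
    Set.MapsTo (fun t : ℕ × ℕ × ℕ => (t.1, t.2.1, t.2.2 / D))
      ↑(range M ×ˢ range M ×ˢ range M) ↑(range M ×ˢ range M ×ˢ range B) := by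
  rintro ⟨i, j, k⟩ ht
  simp only [mem_coe, mem_product, mem_range] at ht ⊢
  exact ⟨ht.1, ht.2.1, Nat.div_lt_of_lt_mul (by rw [Nat.mul_comm, ← hM]; exact ht.2.2)⟩

theorem stmt_6_general (d B D M : ℕ) (hM' : M = B * D) :
    (((Finset.range M) ×ˢ (Finset.range M) ×ˢ (Finset.range M)).filter
        (fun t => (pt d (t.1, t.2.1)).2 = (pt D (t.2.2, t.2.1)).2)).card * D
      ≤ M ^ 3 := by
  have hmaps := (mapsTo_div_range_product B D M hM').mono_left
    (coe_subset.2 (filter_subset (fun t => (pt d (t.1, t.2.1)).2 = (pt D (t.2.2, t.2.1)).2) _))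
  calc _ ≤ (range M ×ˢ range M ×ˢ range B).card * D :=
        Nat.mul_le_mul_right D (card_le_card_of_injOn _ hmaps (injOn_div_filter_pt_snd_eq d D _))
    _ = M ^ 3 := by simp only [card_product, card_range, hM']; ring

/-- For `M = bd = BD`, the count of `(i,j,k) ∈ [M]³` with
`π₂∘Γ(b,d)(i,j) = π₂∘Γ(B,D)(k,j)` is at most `M³/D`. -/
theorem stmt_6 (b d B D M : ℕ) (hb : 0 < b) (hd : 0 < d) (hB : 0 < B)
    (hD : 0 < D) (hM : M = b * d) (hM' : M = B * D) :
    (((Finset.range M) ×ˢ (Finset.range M) ×ˢ (Finset.range M)).filter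
        (fun t => (pt d (t.1, t.2.1)).2 = (pt D (t.2.2, t.2.1)).2)).card * D
      ≤ M ^ 3 :=
  stmt_6_general d B D M hM'
end

section
/- Let M = bd = BD with b,d,B,D positive integers. Then #{(i,j,k) ∈ [M]³ : π₁∘Γ(b,d)(i,j) = π₁∘Γ(B,D)(k,j)} ≤ M³/B, where π₁ is projection onto the first coordinate. -/
open Finset

/-- `π₁ Γ(B,D)(k,j)` records `k / D`, so together with `k % D` it determines `k`. -/
theorem eq_of_pt_fst_eq_of_mod_eq {D k₁ k₂ j : ℕ} (h : (pt D (k₁, j)).1 = (pt D (k₂, j)).1)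
    (hmod : k₁ % D = k₂ % D) : k₁ = k₂ := by
  have hdiv : D * (k₁ / D) = D * (k₂ / D) := Nat.add_right_cancel h
  rw [← Nat.div_add_mod k₁ D, ← Nat.div_add_mod k₂ D, hdiv, hmod]

theorem card_filter_eq_pt_fst_le (D M : ℕ) (hD : 0 < D) (f : ℕ × ℕ → ℕ) :
    #{t ∈ range M ×ˢ range M ×ˢ range M | f (t.1, t.2.1) = (pt D (t.2.2, t.2.1)).1}
      ≤ M * M * D := by
  calc _ ≤ #(range M ×ˢ range M ×ˢ range D) := by
        refine card_le_card_of_injOn (fun t => (t.1, t.2.1, t.2.2 % D)) ?_ ?_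
        · intro t ht
          simp only [coe_filter, mem_product, mem_range, Set.mem_ofPred_eq] at ht
          simp only [coe_product, coe_range, Set.mem_prod, Set.mem_Iio]
          exact ⟨ht.1.1, ht.1.2.1, Nat.mod_lt _ hD⟩
        · rintro ⟨i₁, j₁, k₁⟩ h₁ ⟨i₂, j₂, k₂⟩ h₂ heq
          simp only [coe_filter, mem_product, mem_range, Set.mem_ofPred_eq] at h₁ h₂
          simp only [Prod.mk.injEq] at heq
          obtain ⟨rfl, rfl, hmod⟩ := heq
          simp only [Prod.mk.injEq, true_and]
          exact eq_of_pt_fst_eq_of_mod_eq (h₁.2.symm.trans h₂.2) hmod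
    _ = M * M * D := by simp only [card_product, card_range, mul_assoc]

theorem stmt_7_general (d B D M : ℕ) (hD : 0 < D) (hM' : M = B * D) :
    (((Finset.range M) ×ˢ (Finset.range M) ×ˢ (Finset.range M)).filter
        (fun t => (pt d (t.1, t.2.1)).1 = (pt D (t.2.2, t.2.1)).1)).card * B
      ≤ M ^ 3 := by
  calc _ ≤ M * M * D * B :=
        Nat.mul_le_mul_right B (card_filter_eq_pt_fst_le D M hD fun p => (pt d p).1)
    _ = M ^ 3 := by rw [hM']; ring

/-- For `M = bd = BD`, the count of `(i,j,k) ∈ [M]³` with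
`π₁∘Γ(b,d)(i,j) = π₁∘Γ(B,D)(k,j)` is at most `M³/B`. -/
theorem stmt_7 (b d B D M : ℕ) (hb : 0 < b) (hd : 0 < d) (hB : 0 < B)
    (hD : 0 < D) (hM : M = b * d) (hM' : M = B * D) :
    (((Finset.range M) ×ˢ (Finset.range M) ×ˢ (Finset.range M)).filter
        (fun t => (pt d (t.1, t.2.1)).1 = (pt D (t.2.2, t.2.1)).1)).card * B
      ≤ M ^ 3 :=
  stmt_7_general d B D M hD hM'
end

section
/- Let M = bd = BD with b,d,B,D positive integers. If d ≥ D, then #{(i,j,l) ∈ [M]³ : Γ(b,d)(i,j) = Ꞅ(B,D)(l,j)} ≤ min(M²/b, M²/D). -/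
/-- The left partial transpose `Ꞅ(B,D) = t ∘ Γ(B,D)` in 0-based coordinates. -/
def lpt (D : ℕ) (p : ℕ × ℕ) : ℕ × ℕ :=
  (D * (p.2 / D) + p.1 % D, D * (p.1 / D) + p.2 % D)

private lemma uniq_dm {d q1 q2 x1 x2 : ℕ} (hd : 0 < d) (hx1 : x1 < d) (hx2 : x2 < d)
    (h : d * q1 + x1 = d * q2 + x2) : q1 = q2 ∧ x1 = x2 := by
  have hx : x1 = x2 := by
    have := congrArg (· % d) h
    simpa [Nat.mul_add_mod, Nat.mod_eq_of_lt hx1, Nat.mod_eq_of_lt hx2] using this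
  subst hx
  exact ⟨Nat.eq_of_mul_eq_mul_left hd (by omega), rfl⟩

private lemma key_inj {d D : ℕ} (hd : 0 < d) (hD : 0 < D) (hdD : D ≤ d)
    {i i' j l l' : ℕ}
    (h : pt d (i, j) = lpt D (l, j)) (h' : pt d (i', j) = lpt D (l', j))
    (hkey : i % d = i' % d ∨ l / D = l' / D) : i = i' ∧ l = l' := by
  simp only [pt, lpt, Prod.mk.injEq] at h h'
  obtain ⟨e1, e2⟩ := h
  obtain ⟨e1', e2'⟩ := h'
  -- From e1, e1': d*(i/d) + l'%D = d*(i'/d) + l%D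
  have hmod : l % D < d := lt_of_lt_of_le (Nat.mod_lt _ hD) hdD
  have hmod' : l' % D < d := lt_of_lt_of_le (Nat.mod_lt _ hD) hdD
  have hq : i / d = i' / d ∧ l' % D = l % D :=
    uniq_dm hd hmod' hmod (by omega)
  -- From e2, e2' with hkey
  have hk2 : i % d = i' % d ∧ l / D = l' / D := by
    rcases hkey with hk | hk
    · refine ⟨hk, Nat.eq_of_mul_eq_mul_left hD ?_⟩
      omega
    · refine ⟨?_, hk⟩
      have : D * (l / D) = D * (l' / D) := by rw [hk]
      omega
  constructor
  · have hi := Nat.div_add_mod i d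
    have hi' := Nat.div_add_mod i' d
    have := hq.1; have := hk2.1
    omega
  · have hl := Nat.div_add_mod l D
    have hl' := Nat.div_add_mod l' D
    have := hq.2; have := hk2.2
    omega

/-- For `M = bd = BD` with `d ≥ D`, the count of `(i,j,l) ∈ [M]³` with
`Γ(b,d)(i,j) = Ꞅ(B,D)(l,j)` is at most `min(M²/b, M²/D)`. -/
theorem stmt_8 (b d B D M : ℕ) (hb : 0 < b) (hd : 0 < d) (hB : 0 < B)
    (hD : 0 < D) (hM : M = b * d) (hM' : M = B * D) (hdD : D ≤ d) :
    (((Finset.range M) ×ˢ (Finset.range M) ×ˢ (Finset.range M)).filter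
        (fun t => pt d (t.1, t.2.1) = lpt D (t.2.2, t.2.1))).card * b ≤ M ^ 2 ∧
    (((Finset.range M) ×ˢ (Finset.range M) ×ˢ (Finset.range M)).filter
        (fun t => pt d (t.1, t.2.1) = lpt D (t.2.2, t.2.1))).card * D ≤ M ^ 2 := by
  set S := (((Finset.range M) ×ˢ (Finset.range M) ×ˢ (Finset.range M)).filter
      (fun t => pt d (t.1, t.2.1) = lpt D (t.2.2, t.2.1))) with hS
  have mem_S : ∀ t ∈ S, t.1 < M ∧ t.2.1 < M ∧ t.2.2 < M ∧
      pt d (t.1, t.2.1) = lpt D (t.2.2, t.2.1) := by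
    intro t ht
    rw [hS, Finset.mem_filter] at ht
    simp only [Finset.mem_product, Finset.mem_range] at ht
    exact ⟨ht.1.1, ht.1.2.1, ht.1.2.2, ht.2⟩
  have h1 : S.card ≤ M * d := by
    have := Finset.card_le_card_of_injOn
      (fun t => (t.2.1, t.1 % d))
      (s := S) (t := (Finset.range M) ×ˢ (Finset.range d))
      (by
        intro t ht
        obtain ⟨_, hj, _, _⟩ := mem_S t ht
        simp only [Finset.mem_coe, Finset.mem_product, Finset.mem_range]
        exact ⟨hj, Nat.mod_lt _ hd⟩)
      (by
        intro t ht t' ht' heq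
        obtain ⟨_, _, _, h⟩ := mem_S t ht
        obtain ⟨_, _, _, h'⟩ := mem_S t' ht'
        simp only [Prod.mk.injEq] at heq
        obtain ⟨hj, hm⟩ := heq
        rw [← hj] at h'
        obtain ⟨hi, hl⟩ := key_inj hd hD hdD h h' (Or.inl hm)
        exact Prod.ext hi (Prod.ext hj hl))
    simpa using this
  have h2 : S.card ≤ M * B := by
    have := Finset.card_le_card_of_injOn
      (fun t => (t.2.1, t.2.2 / D))
      (s := S) (t := (Finset.range M) ×ˢ (Finset.range B))
      (by
        intro t ht
        obtain ⟨_, hj, hl, _⟩ := mem_S t ht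
        simp only [Finset.mem_coe, Finset.mem_product, Finset.mem_range]
        refine ⟨hj, ?_⟩
        rw [Nat.div_lt_iff_lt_mul hD]
        omega)
      (by
        intro t ht t' ht' heq
        obtain ⟨_, _, _, h⟩ := mem_S t ht
        obtain ⟨_, _, _, h'⟩ := mem_S t' ht'
        simp only [Prod.mk.injEq] at heq
        obtain ⟨hj, hm⟩ := heq
        rw [← hj] at h'
        obtain ⟨hi, hl⟩ := key_inj hd hD hdD h h' (Or.inr hm)
        exact Prod.ext hi (Prod.ext hj hl))
    simpa using this
  constructor
  · calc S.card * b ≤ (M * d) * b := Nat.mul_le_mul_right _ h1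
    _ = M ^ 2 := by rw [hM]; ring
  · calc S.card * D ≤ (M * B) * D := Nat.mul_le_mul_right _ h2
    _ = M ^ 2 := by rw [hM']; ring
end

section
/- Let M = bd = BD with b,d,B,D positive integers and d ≤ D. Then #{(i,j,l) ∈ [M]³ : Γ(b,d)(i,j) = Ꞅ(B,D)(l,j)} ≤ min(M²/d, M²/B). -/
/-!
Fix `j`. Comparing the second coordinates of `Γ(b,d)(i,j) = Ꞅ(B,D)(l,j)` for two solutions
`(i₁,l₁)`, `(i₂,l₂)` gives `D ⌊l₁/D⌋ + i₂ mod d = D ⌊l₂/D⌋ + i₁ mod d`; since `i mod d < d ≤ D`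
this forces `⌊l₁/D⌋ = ⌊l₂/D⌋` and `i₁ ≡ i₂ (mod d)`. The first coordinates then give
`d ⌊i₁/d⌋ + l₂ mod D = d ⌊i₂/d⌋ + l₁ mod D`, so a solution is determined by `j` together with
either `⌊i/d⌋ < b` or `l mod D < D`. Hence there are at most `M·b = M²/d` and at most
`M·D = M²/B` solutions.
-/

open Finset

def solutions (d D M : ℕ) : Finset (ℕ × ℕ × ℕ) :=
  (range M ×ˢ range M ×ˢ range M).filter fun t => pt d (t.1, t.2.1) = lpt D (t.2.2, t.2.1)

lemma Nat.eq_and_eq_of_mul_add_eq_mul_add {D q q' r r' : ℕ} (hr : r < D) (hr' : r' < D)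
    (h : D * q + r = D * q' + r') : q = q' ∧ r = r' := by
  have hD : 0 < D := r.zero_le.trans_lt hr
  obtain ⟨hq, hm⟩ := (Nat.div_mod_unique hD).2 ⟨by rw [add_comm, h], hr⟩
  rw [Nat.add_comm, Nat.add_mul_div_left _ _ hD, Nat.div_eq_of_lt hr', zero_add] at hq
  rw [Nat.add_comm, Nat.add_mul_mod_self_left, Nat.mod_eq_of_lt hr'] at hm
  exact ⟨hq.symm, hm.symm⟩

section PartialTransposes

variable {d D j i₁ i₂ l₁ l₂ : ℕ}

lemma mod_eq_and_div_eq_of_pt_eq_lpt (hd : 0 < d) (hdD : d ≤ D)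
    (h₁ : pt d (i₁, j) = lpt D (l₁, j)) (h₂ : pt d (i₂, j) = lpt D (l₂, j)) :
    i₁ % d = i₂ % d ∧ l₁ / D = l₂ / D := by
  simp only [pt, lpt, Prod.mk.injEq] at h₁ h₂
  have h : D * (l₁ / D) + i₂ % d = D * (l₂ / D) + i₁ % d := by omega
  obtain ⟨hdiv, hmod⟩ := Nat.eq_and_eq_of_mul_add_eq_mul_add
    ((Nat.mod_lt _ hd).trans_le hdD) ((Nat.mod_lt _ hd).trans_le hdD) h
  exact ⟨hmod.symm, hdiv⟩

lemma eq_of_pt_eq_lpt (hd : 0 < d) (hdD : d ≤ D)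
    (h₁ : pt d (i₁, j) = lpt D (l₁, j)) (h₂ : pt d (i₂, j) = lpt D (l₂, j))
    (h : i₁ / d = i₂ / d ∨ l₁ % D = l₂ % D) : i₁ = i₂ ∧ l₁ = l₂ := by
  obtain ⟨hmod, hdiv⟩ := mod_eq_and_div_eq_of_pt_eq_lpt hd hdD h₁ h₂
  have hfst : d * (i₁ / d) + l₂ % D = d * (i₂ / d) + l₁ % D := by
    simp only [pt, lpt, Prod.mk.injEq] at h₁ h₂
    omega
  have hboth : i₁ / d = i₂ / d ∧ l₁ % D = l₂ % D := by
    rcases h with h | h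
    · rw [h] at hfst
      exact ⟨h, (Nat.add_left_cancel hfst).symm⟩
    · rw [h] at hfst
      exact ⟨Nat.eq_of_mul_eq_mul_left hd (Nat.add_right_cancel hfst), h⟩
  exact ⟨Nat.ext_div_modEq hboth.1 hmod, Nat.ext_div_modEq hdiv hboth.2⟩

lemma card_solutions_le_of_injOn {M n : ℕ} (f : ℕ → ℕ → ℕ)
    (hf : ∀ i l, i < M → l < M → f i l < n)
    (hinj : ∀ j i₁ i₂ l₁ l₂, pt d (i₁, j) = lpt D (l₁, j) → pt d (i₂, j) = lpt D (l₂, j) →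
      f i₁ l₁ = f i₂ l₂ → i₁ = i₂ ∧ l₁ = l₂) :
    #(solutions d D M) ≤ M * n := by
  calc #(solutions d D M) ≤ #(range M ×ˢ range n) := by
        refine card_le_card_of_injOn (fun t => (t.2.1, f t.1 t.2.2)) ?_ ?_
        · rintro ⟨i, j, l⟩ ht
          simp only [solutions, coe_filter, Set.mem_ofPred_eq, mem_product, mem_range] at ht
          simpa using ⟨ht.1.2.1, hf i l ht.1.1 ht.1.2.2⟩
        · rintro ⟨i₁, j, l₁⟩ ht₁ ⟨i₂, j₂, l₂⟩ ht₂ heq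
          simp only [solutions, coe_filter, Set.mem_ofPred_eq] at ht₁ ht₂
          obtain ⟨-, h₁⟩ := ht₁
          obtain ⟨-, h₂⟩ := ht₂
          obtain ⟨rfl, hfeq⟩ := Prod.mk.inj heq
          obtain ⟨rfl, rfl⟩ := hinj j i₁ i₂ l₁ l₂ h₁ h₂ hfeq
          rfl
    _ = M * n := by simp

end PartialTransposes

theorem stmt_9_general (b d B D M : ℕ) (hd : 0 < d)
    (hM : M = b * d) (hM' : M = B * D) (hdD : d ≤ D) :
    (((Finset.range M) ×ˢ (Finset.range M) ×ˢ (Finset.range M)).filter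
        (fun t => pt d (t.1, t.2.1) = lpt D (t.2.2, t.2.1))).card * d ≤ M ^ 2 ∧
    (((Finset.range M) ×ˢ (Finset.range M) ×ˢ (Finset.range M)).filter
        (fun t => pt d (t.1, t.2.1) = lpt D (t.2.2, t.2.1))).card * B ≤ M ^ 2 := by
  have hD : 0 < D := hd.trans_le hdD
  have hcard_div : #(solutions d D M) ≤ M * b := card_solutions_le_of_injOn (fun i _ => i / d)
    (fun i _ hi _ => Nat.div_lt_of_lt_mul (by rwa [mul_comm, ← hM]))
    (fun _ _ _ _ _ h₁ h₂ h => eq_of_pt_eq_lpt hd hdD h₁ h₂ (.inl h))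
  have hcard_mod : #(solutions d D M) ≤ M * D := card_solutions_le_of_injOn (fun _ l => l % D)
    (fun _ l _ _ => Nat.mod_lt l hD)
    (fun _ _ _ _ _ h₁ h₂ h => eq_of_pt_eq_lpt hd hdD h₁ h₂ (.inr h))
  constructor
  · calc #(solutions d D M) * d ≤ M * b * d := Nat.mul_le_mul_right d hcard_div
      _ = M ^ 2 := by subst hM; ring
  · calc #(solutions d D M) * B ≤ M * D * B := Nat.mul_le_mul_right B hcard_mod
      _ = M ^ 2 := by subst hM'; ring

/-- For `M = bd = BD` with `d ≤ D`, the count of `(i,j,l) ∈ [M]³` with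
`Γ(b,d)(i,j) = Ꞅ(B,D)(l,j)` is at most `min(M²/d, M²/B)`. -/
theorem stmt_9 (b d B D M : ℕ) (hb : 0 < b) (hd : 0 < d) (hB : 0 < B)
    (hD : 0 < D) (hM : M = b * d) (hM' : M = B * D) (hdD : d ≤ D) :
    (((Finset.range M) ×ˢ (Finset.range M) ×ˢ (Finset.range M)).filter
        (fun t => pt d (t.1, t.2.1) = lpt D (t.2.2, t.2.1))).card * d ≤ M ^ 2 ∧
    (((Finset.range M) ×ˢ (Finset.range M) ×ˢ (Finset.range M)).filter
        (fun t => pt d (t.1, t.2.1) = lpt D (t.2.2, t.2.1))).card * B ≤ M ^ 2 :=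
  stmt_9_general b d B D M hd hM hM' hdD
end

section
/- Let M = bd = BD with b,d,B,D positive integers. Then #{(i,j,l) ∈ [M]³ : π₁∘Γ(b,d)(i,j) = π₁∘Ꞅ(B,D)(l,j)} ≤ min(M³/D, M³/b). -/
/-!
The defining equation `d * (i / d) + j % d = D * (j / D) + l % D` determines `l % D` from
`(i, j)` and `i / d` from `(j, l)`. Hence `(i, j, l) ↦ (i, j, l / D)` and
`(i, j, l) ↦ (i % d, j, l)` are injective on the solution set, which therefore has at most `M² B = M³ / D` and at most
`d M² = M³ / b` elements.
-/

def collisions (d D M : ℕ) : Finset (ℕ × ℕ × ℕ) :=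
  ((Finset.range M) ×ˢ (Finset.range M) ×ˢ (Finset.range M)).filter
    (fun t => (pt d (t.1, t.2.1)).1 = (lpt D (t.2.2, t.2.1)).1)

namespace collisions

variable {d D M : ℕ}

theorem mem_iff {i j l : ℕ} :
    (i, j, l) ∈ collisions d D M ↔
      (i < M ∧ j < M ∧ l < M) ∧ d * (i / d) + j % d = D * (j / D) + l % D := by
  simp only [collisions, Finset.mem_filter, Finset.mem_product, Finset.mem_range]
  rfl

theorem mod_eq_of_mem {i j l l' : ℕ} (h : (i, j, l) ∈ collisions d D M)
    (h' : (i, j, l') ∈ collisions d D M) : l % D = l' % D :=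
  Nat.add_left_cancel ((mem_iff.1 h).2.symm.trans (mem_iff.1 h').2)

theorem div_eq_of_mem (hd : 0 < d) {i i' j l : ℕ} (h : (i, j, l) ∈ collisions d D M)
    (h' : (i', j, l) ∈ collisions d D M) : i / d = i' / d :=
  Nat.eq_of_mul_eq_mul_left hd <|
    Nat.add_right_cancel ((mem_iff.1 h).2.trans (mem_iff.1 h').2.symm)

theorem card_le_mul_mul_of_le_mul {B : ℕ} (hM : M ≤ B * D) :
    (collisions d D M).card ≤ M * M * B := by
  have hinj : Set.InjOn (fun t : ℕ × ℕ × ℕ => (t.1, t.2.1, t.2.2 / D)) (collisions d D M) := by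
    rintro ⟨i, j, l⟩ h ⟨i', j', l'⟩ h' he
    simp only [Prod.mk.injEq] at he ⊢
    obtain ⟨rfl, rfl, hdiv⟩ := he
    exact ⟨rfl, rfl, Nat.ext_div_modEq hdiv (mod_eq_of_mem h h')⟩
  have hmaps : Set.MapsTo (fun t : ℕ × ℕ × ℕ => (t.1, t.2.1, t.2.2 / D)) (collisions d D M)
      ((Finset.range M ×ˢ Finset.range M ×ˢ Finset.range B : Finset (ℕ × ℕ × ℕ)) : Set _) := by
    rintro ⟨i, j, l⟩ h
    obtain ⟨⟨hi, hj, hl⟩, -⟩ := mem_iff.1 h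
    simp only [Finset.mem_coe, Finset.mem_product, Finset.mem_range]
    exact ⟨hi, hj, Nat.div_lt_of_lt_mul (by rw [mul_comm]; omega)⟩
  simpa [mul_assoc] using Finset.card_le_card_of_injOn _ hmaps hinj

theorem card_le_mul_mul (hd : 0 < d) : (collisions d D M).card ≤ d * M * M := by
  have hinj : Set.InjOn (fun t : ℕ × ℕ × ℕ => (t.1 % d, t.2)) (collisions d D M) := by
    rintro ⟨i, j, l⟩ h ⟨i', j', l'⟩ h' he
    simp only [Prod.mk.injEq] at he ⊢
    obtain ⟨hmod, rfl, rfl⟩ := he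
    exact ⟨Nat.ext_div_modEq (div_eq_of_mem hd h h') hmod, rfl, rfl⟩
  have hmaps : Set.MapsTo (fun t : ℕ × ℕ × ℕ => (t.1 % d, t.2)) (collisions d D M)
      ((Finset.range d ×ˢ Finset.range M ×ˢ Finset.range M : Finset (ℕ × ℕ × ℕ)) : Set _) := by
    rintro ⟨i, j, l⟩ h
    obtain ⟨⟨-, hj, hl⟩, -⟩ := mem_iff.1 h
    simp only [Finset.mem_coe, Finset.mem_product, Finset.mem_range]
    exact ⟨Nat.mod_lt i hd, hj, hl⟩
  simpa [mul_assoc] using Finset.card_le_card_of_injOn _ hmaps hinj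

end collisions

theorem stmt_10_general (b d B D M : ℕ) (hd : 0 < d) (hM : M = b * d) (hM' : M = B * D) :
    (((Finset.range M) ×ˢ (Finset.range M) ×ˢ (Finset.range M)).filter
        (fun t => (pt d (t.1, t.2.1)).1 = (lpt D (t.2.2, t.2.1)).1)).card * D
      ≤ M ^ 3 ∧
    (((Finset.range M) ×ˢ (Finset.range M) ×ˢ (Finset.range M)).filter
        (fun t => (pt d (t.1, t.2.1)).1 = (lpt D (t.2.2, t.2.1)).1)).card * b
      ≤ M ^ 3 := by
  change (collisions d D M).card * D ≤ M ^ 3 ∧ (collisions d D M).card * b ≤ M ^ 3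
  constructor
  · calc (collisions d D M).card * D ≤ M * M * B * D :=
          Nat.mul_le_mul_right D (collisions.card_le_mul_mul_of_le_mul hM'.le)
      _ = M ^ 3 := by subst hM'; ring
  · calc (collisions d D M).card * b ≤ d * M * M * b :=
          Nat.mul_le_mul_right b (collisions.card_le_mul_mul hd)
      _ = M ^ 3 := by subst hM; ring

/-- For `M = bd = BD`, the count of `(i,j,l) ∈ [M]³` with
`π₁∘Γ(b,d)(i,j) = π₁∘Ꞅ(B,D)(l,j)` is at most `min(M³/D, M³/b)`. -/
theorem stmt_10 (b d B D M : ℕ) (hb : 0 < b) (hd : 0 < d) (hB : 0 < B)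
    (hD : 0 < D) (hM : M = b * d) (hM' : M = B * D) :
    (((Finset.range M) ×ˢ (Finset.range M) ×ˢ (Finset.range M)).filter
        (fun t => (pt d (t.1, t.2.1)).1 = (lpt D (t.2.2, t.2.1)).1)).card * D
      ≤ M ^ 3 ∧
    (((Finset.range M) ×ˢ (Finset.range M) ×ˢ (Finset.range M)).filter
        (fun t => (pt d (t.1, t.2.1)).1 = (lpt D (t.2.2, t.2.1)).1)).card * b
      ≤ M ^ 3 :=
  stmt_10_general b d B D M hd hM hM'
end

section
/- Let M = bd = BD with b,d,B,D positive integers, and let e be a positive integer with d·e ≤ D. Then #{(i,j) ∈ [M]² : Γ(b,d)(i,j) = Ꞅ(B,D)(i,j)} ≥ d·e², since every pair (α₁·d+β, α₂·d+β) with 0 ≤ α₁,α₂ ≤ e−1 and β ∈ [d] is a common fixed point of both Γ(b,d) and Ꞅ(B,D). -/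
open Finset

theorem pt_eq_self_iff (d : ℕ) (p : ℕ × ℕ) : pt d p = p ↔ p.1 % d = p.2 % d := by
  obtain ⟨x, y⟩ := p
  have hx := Nat.div_add_mod x d
  have hy := Nat.div_add_mod y d
  simp only [pt, Prod.ext_iff]
  omega

theorem lpt_eq_self_iff (D : ℕ) (p : ℕ × ℕ) : lpt D p = p ↔ p.1 / D = p.2 / D := by
  obtain ⟨x, y⟩ := p
  have hx := Nat.div_add_mod x D
  have hy := Nat.div_add_mod y D
  simp only [lpt, Prod.ext_iff]
  rcases D.eq_zero_or_pos with rfl | hD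
  · simp
  · rw [← (Nat.mul_left_cancel_iff hD : D * (x / D) = D * (y / D) ↔ _)]
    omega

theorem pt_mul_add_eq_self {d β : ℕ} (α₁ α₂ : ℕ) (hβ : β < d) :
    pt d (α₁ * d + β, α₂ * d + β) = (α₁ * d + β, α₂ * d + β) :=
  (pt_eq_self_iff _ _).2 (by simp only [Nat.mul_add_mod_of_lt hβ])

theorem lpt_eq_self_of_lt {D x y : ℕ} (hx : x < D) (hy : y < D) : lpt D (x, y) = (x, y) :=
  (lpt_eq_self_iff _ _).2 (by simp only [Nat.div_eq_of_lt hx, Nat.div_eq_of_lt hy])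

theorem mul_add_lt_mul_of_lt {α β d e : ℕ} (hα : α < e) (hβ : β < d) : α * d + β < e * d := by
  nlinarith

theorem div_mod_mul_add {α β d : ℕ} (hβ : β < d) :
    (α * d + β) / d = α ∧ (α * d + β) % d = β :=
  (Nat.div_mod_unique (β.zero_le.trans_lt hβ)).2 ⟨by ring, hβ⟩

theorem injOn_mul_add_pair (d : ℕ) :
    Set.InjOn (fun q : ℕ × ℕ × ℕ => (q.1 * d + q.2.2, q.2.1 * d + q.2.2)) {q | q.2.2 < d} := by
  rintro ⟨α₁, α₂, β⟩ (hβ : β < d) ⟨α₁', α₂', β'⟩ (hβ' : β' < d) h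
  simp only [Prod.mk.injEq] at h ⊢
  obtain ⟨h₁, h₂⟩ := h
  have e₁ := div_mod_mul_add (α := α₁) hβ
  have e₂ := div_mod_mul_add (α := α₂) hβ
  rw [h₁] at e₁
  rw [h₂] at e₂
  have e₁' := div_mod_mul_add (α := α₁') hβ'
  have e₂' := div_mod_mul_add (α := α₂') hβ'
  omega

theorem mul_sq_le_card_of_mul_add_pair_mem {d e : ℕ} {s : Finset (ℕ × ℕ)}
    (hs : ∀ α₁ α₂ β, α₁ < e → α₂ < e → β < d → (α₁ * d + β, α₂ * d + β) ∈ s) :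
    d * e ^ 2 ≤ #s :=
  calc d * e ^ 2 = #(range e ×ˢ range e ×ˢ range d) := by
        simp only [card_product, card_range]; ring
    _ ≤ #s := by
      refine card_le_card_of_injOn _ (fun q hq => ?_) ((injOn_mul_add_pair d).mono fun q hq => ?_)
      all_goals simp only [coe_product, coe_range, Set.mem_prod, Set.mem_Iio] at hq
      exacts [hs _ _ _ hq.1 hq.2.1 hq.2.2, hq.2.2]

theorem stmt_12_general (d B D M e : ℕ) (hB : 0 < B) (hM' : M = B * D)
    (hde : d * e ≤ D) :
    d * e ^ 2 ≤ (((Finset.range M) ×ˢ (Finset.range M)).filter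
        (fun p => pt d p = lpt D p)).card ∧
    (∀ α₁ α₂ β : ℕ, α₁ < e → α₂ < e → β < d →
      pt d (α₁ * d + β, α₂ * d + β) = (α₁ * d + β, α₂ * d + β) ∧
      lpt D (α₁ * d + β, α₂ * d + β) = (α₁ * d + β, α₂ * d + β)) := by
  have hlt : ∀ {α β}, α < e → β < d → α * d + β < D := fun hα hβ =>
    (mul_add_lt_mul_of_lt hα hβ).trans_le (by rwa [Nat.mul_comm])
  have hDM : D ≤ M := hM' ▸ Nat.le_mul_of_pos_left D hB
  refine ⟨mul_sq_le_card_of_mul_add_pair_mem fun α₁ α₂ β h₁ h₂ hβ => ?_,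
    fun α₁ α₂ β h₁ h₂ hβ => ⟨pt_mul_add_eq_self α₁ α₂ hβ, lpt_eq_self_of_lt (hlt h₁ hβ) (hlt h₂ hβ)⟩⟩
  simp only [mem_filter, mem_product, mem_range]
  refine ⟨⟨(hlt h₁ hβ).trans_le hDM, (hlt h₂ hβ).trans_le hDM⟩, ?_⟩
  rw [pt_mul_add_eq_self α₁ α₂ hβ, lpt_eq_self_of_lt (hlt h₁ hβ) (hlt h₂ hβ)]

/-- For `M = bd = BD` and `e` with `d·e ≤ D`, the number of points where
`Γ(b,d)` and `Ꞅ(B,D)` agree is at least `d·e²`; indeed every pair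
`(α₁·d+β, α₂·d+β)` with `α₁, α₂ < e`, `β < d` is a common fixed point of
both maps. -/
theorem stmt_12 (b d B D M e : ℕ) (hb : 0 < b) (hd : 0 < d) (hB : 0 < B)
    (hD : 0 < D) (he : 0 < e) (hM : M = b * d) (hM' : M = B * D)
    (hde : d * e ≤ D) :
    d * e ^ 2 ≤ (((Finset.range M) ×ˢ (Finset.range M)).filter
        (fun p => pt d p = lpt D p)).card ∧
    (∀ α₁ α₂ β : ℕ, α₁ < e → α₂ < e → β < d →
      pt d (α₁ * d + β, α₂ * d + β) = (α₁ * d + β, α₂ * d + β) ∧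
      lpt D (α₁ * d + β, α₂ * d + β) = (α₁ * d + β, α₂ * d + β)) :=
  stmt_12_general d B D M e hB hM' hde
end

section
/- Let m ≥ 1 and let ν₂ be the pair partition of [2m] pairing 2k−1 with 2k+2 (indices mod 2m), and ν₀ the partition of [2m] with blocks {1}, {2,3}, {4,5}, …, {2m−2,2m−1}, {2m}. If m is odd, then ν₂ ∨ ν₀ = 1_{2m}; if m is even, then ν₂ ∨ ν₀ has exactly two blocks: one containing all elements 4k and 4k+1, and one containing all elements 4k+2 and 4k+3 (indices mod 2m). -/
/-!
Every `x ≥ 4` is joined to `x - 4` by one `ν₂`-edge and one `ν₀`-edge, so every element is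
joined to its residue mod 4; moreover `0 ~ 3` through `ν₂` and `1 ~ 2` through `ν₀`. Hence
`ν₂ ∨ ν₀` has at most the two blocks `{x ≡ 0, 3}` and `{x ≡ 1, 2} (mod 4)`. When `4 ∣ 2m`
both generating relations preserve these blocks; when `m` is odd the wrap-around `ν₂`-edge
from `2m - 2 ≡ 0` to `1` merges them.
-/

/-- The pairing `ν₂` of `[2m]` (0-based): pairs `x ↦ (x+3) mod 2m` for even
`x`; in 1-based labels this pairs `2k-1` with `2k+2` (mod `2m`). -/
def nu2 (m : ℕ) : Setoid (Fin (2 * m)) :=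
  Relation.EqvGen.setoid (fun x y => Even x.val ∧ y.val = (x.val + 3) % (2 * m))

/-- The partition `ν₀` of `[2m]` (0-based): blocks `{2k-1, 2k}` for
`k = 1, …, m-1` and singletons `{0}`, `{2m-1}`; in 1-based labels, blocks
`{2k, 2k+1}` and singletons `{1}`, `{2m}`. -/
def nu0 (m : ℕ) : Setoid (Fin (2 * m)) :=
  Relation.EqvGen.setoid
    (fun x y => Odd x.val ∧ y.val = x.val + 1 ∧ y.val ≤ 2 * m - 2)

def modFourBlocks (m : ℕ) : Setoid (Fin (2 * m)) :=
  Setoid.ker fun x => x.val % 4 = 0 ∨ x.val % 4 = 3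

section

variable {m : ℕ}

theorem sup_rel_of_nu2 {x y : Fin (2 * m)} (hx : Even x.val)
    (hy : y.val = (x.val + 3) % (2 * m)) : (nu2 m ⊔ nu0 m) x y :=
  le_sup_left (a := nu2 m) (Relation.EqvGen.rel _ _ ⟨hx, hy⟩)

theorem sup_rel_of_nu0 {x y : Fin (2 * m)} (hx : Odd x.val) (hy : y.val = x.val + 1)
    (hle : y.val ≤ 2 * m - 2) : (nu2 m ⊔ nu0 m) x y :=
  le_sup_right (b := nu0 m) (Relation.EqvGen.rel _ _ ⟨hx, hy, hle⟩)

theorem sup_rel_add_four (x : ℕ) (h : x + 4 < 2 * m) :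
    (nu2 m ⊔ nu0 m) ⟨x, by omega⟩ ⟨x + 4, h⟩ := by
  rcases Nat.even_or_odd x with hx | hx
  · have hx' : x % 2 = 0 := Nat.even_iff.1 hx
    refine (nu2 m ⊔ nu0 m).trans' (y := ⟨x + 3, by omega⟩) (sup_rel_of_nu2 hx ?_)
      (sup_rel_of_nu0 (Nat.odd_iff.2 (show (x + 3) % 2 = 1 by omega)) rfl
        (show x + 4 ≤ 2 * m - 2 by omega))
    exact (Nat.mod_eq_of_lt (show x + 3 < 2 * m by omega)).symm
  · have hx' : x % 2 = 1 := Nat.odd_iff.1 hx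
    refine (nu2 m ⊔ nu0 m).trans' (y := ⟨x + 1, by omega⟩)
      (sup_rel_of_nu0 hx rfl (show x + 1 ≤ 2 * m - 2 by omega))
      (sup_rel_of_nu2 (Nat.even_iff.2 (show (x + 1) % 2 = 0 by omega)) ?_)
    exact (Nat.mod_eq_of_lt (show x + 1 + 3 < 2 * m by omega)).symm

theorem sup_rel_mod_four (x : Fin (2 * m)) :
    (nu2 m ⊔ nu0 m) ⟨x.val % 4, (Nat.mod_le _ _).trans_lt x.isLt⟩ x := by
  obtain ⟨x, hx⟩ := x
  induction x using Nat.strong_induction_on with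
  | _ x ih =>
    by_cases h4 : x < 4
    · simp only [Nat.mod_eq_of_lt h4]
      exact (nu2 m ⊔ nu0 m).refl' _
    · obtain ⟨y, rfl⟩ : ∃ y, x = y + 4 := ⟨x - 4, by omega⟩
      simpa using (nu2 m ⊔ nu0 m).trans' (ih y (by omega) (by omega)) (sup_rel_add_four y hx)

theorem sup_rel_zero_of_mod_four {x : Fin (2 * m)} (h : x.val % 4 = 0 ∨ x.val % 4 = 3) :
    (nu2 m ⊔ nu0 m) ⟨0, x.pos⟩ x := by
  refine (nu2 m ⊔ nu0 m).trans' ?_ (sup_rel_mod_four x)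
  rcases h with h | h
  · simp only [h]
    exact (nu2 m ⊔ nu0 m).refl' _
  · simp only [h]
    exact sup_rel_of_nu2 (Nat.even_iff.2 rfl) (Nat.mod_eq_of_lt (by omega)).symm

theorem sup_rel_one_of_mod_four {x : Fin (2 * m)} (h : x.val % 4 = 1 ∨ x.val % 4 = 2) :
    (nu2 m ⊔ nu0 m) ⟨1, by omega⟩ x := by
  refine (nu2 m ⊔ nu0 m).trans' ?_ (sup_rel_mod_four x)
  rcases h with h | h
  · simp only [h]
    exact (nu2 m ⊔ nu0 m).refl' _
  · simp only [h]
    exact sup_rel_of_nu0 odd_one rfl (show 2 ≤ 2 * m - 2 by omega)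

theorem modFourBlocks_le_sup : modFourBlocks m ≤ nu2 m ⊔ nu0 m := by
  intro x y hxy
  have hxy : _ ↔ _ := eq_iff_iff.1 (Setoid.ker_def.1 hxy)
  by_cases hx : x.val % 4 = 0 ∨ x.val % 4 = 3
  · exact (nu2 m ⊔ nu0 m).trans' ((nu2 m ⊔ nu0 m).symm' (sup_rel_zero_of_mod_four hx))
      (sup_rel_zero_of_mod_four (hxy.1 hx))
  · have hy : ¬(y.val % 4 = 0 ∨ y.val % 4 = 3) := mt hxy.2 hx
    exact (nu2 m ⊔ nu0 m).trans' ((nu2 m ⊔ nu0 m).symm' (sup_rel_one_of_mod_four (by omega)))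
      (sup_rel_one_of_mod_four (by omega))

theorem sup_le_modFourBlocks (hm : Even m) : nu2 m ⊔ nu0 m ≤ modFourBlocks m := by
  have h4 : 4 ∣ 2 * m := by obtain ⟨k, rfl⟩ := hm; exact ⟨k, by ring⟩
  refine sup_le (Setoid.eqvGen_le ?_) (Setoid.eqvGen_le ?_) <;>
    rintro x y hxy <;> refine Setoid.ker_def.2 (eq_iff_iff.2 ?_)
  · obtain ⟨hx, hy⟩ := hxy
    have : y.val % 4 = (x.val + 3) % 4 := by rw [hy, Nat.mod_mod_of_dvd _ h4]
    have := Nat.even_iff.1 hx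
    omega
  · obtain ⟨hx, hy, -⟩ := hxy
    have := Nat.odd_iff.1 hx
    omega

theorem sup_eq_modFourBlocks (hm : Even m) : nu2 m ⊔ nu0 m = modFourBlocks m :=
  le_antisymm (sup_le_modFourBlocks hm) modFourBlocks_le_sup

theorem sup_rel_zero_one (hm : Odd m) :
    (nu2 m ⊔ nu0 m) ⟨0, by have := hm.pos; omega⟩ ⟨1, by have := hm.pos; omega⟩ := by
  have hmod := Nat.odd_iff.1 hm
  let z : Fin (2 * m) := ⟨2 * m - 2, by omega⟩
  refine (nu2 m ⊔ nu0 m).trans' (y := z)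
    (sup_rel_zero_of_mod_four (show (2 * m - 2) % 4 = 0 ∨ _ by omega))
    (sup_rel_of_nu2 (Nat.even_iff.2 (show (2 * m - 2) % 2 = 0 by omega)) ?_)
  have hz : z.val + 3 = 1 + 2 * m := show 2 * m - 2 + 3 = 1 + 2 * m by omega
  rw [hz, Nat.add_mod_right, Nat.mod_eq_of_lt (by omega)]

theorem sup_eq_top (hm : Odd m) : nu2 m ⊔ nu0 m = ⊤ := by
  have hzero (x : Fin (2 * m)) : (nu2 m ⊔ nu0 m) ⟨0, x.pos⟩ x := by
    by_cases hx : x.val % 4 = 0 ∨ x.val % 4 = 3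
    · exact sup_rel_zero_of_mod_four hx
    · exact (nu2 m ⊔ nu0 m).trans' (sup_rel_zero_one hm) (sup_rel_one_of_mod_four (by omega))
  exact eq_top_iff.2 fun x y _ =>
    (nu2 m ⊔ nu0 m).trans' ((nu2 m ⊔ nu0 m).symm' (hzero x)) (hzero y)

end

theorem stmt_15_general (m : ℕ) :
    (Odd m → nu2 m ⊔ nu0 m = ⊤) ∧
    (Even m → ∀ x y : Fin (2 * m),
      (nu2 m ⊔ nu0 m).r x y ↔
        ((x.val % 4 = 0 ∨ x.val % 4 = 3) ↔ (y.val % 4 = 0 ∨ y.val % 4 = 3))) := by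
  refine ⟨sup_eq_top, fun hm x y => ?_⟩
  rw [sup_eq_modFourBlocks hm]
  exact Setoid.ker_def.trans eq_iff_iff

/-- If `m` is odd then `ν₂ ∨ ν₀ = 1_{2m}`; if `m` is even then `ν₂ ∨ ν₀` has
exactly two blocks, one consisting of the elements `≡ 0, 3 (mod 4)` (1-based:
the elements `4k` and `4k+1`) and the other of the elements `≡ 1, 2 (mod 4)`
(1-based: `4k+2` and `4k+3`). -/
theorem stmt_15 (m : ℕ) (hm : 1 ≤ m) :
    (Odd m → nu2 m ⊔ nu0 m = ⊤) ∧
    (Even m → ∀ x y : Fin (2 * m),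
      (nu2 m ⊔ nu0 m).r x y ↔
        ((x.val % 4 = 0 ∨ x.val % 4 = 3) ↔ (y.val % 4 = 0 ∨ y.val % 4 = 3))) :=
  stmt_15_general m
end
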